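/- arXiv:2204.10797 — 2 statements merged into one kernel-verified Lean document; each statement's English description precedes it below -/
import Mathlib

section
/- Let p: T → W be a birational morphism of smooth projective surfaces with total exceptional divisors E_1, ..., E_s, and let Δ be an effective divisor contracted by p with K_T·Δ = 0 and Δ² = -2. Then there exist indices j ≠ k such that Δ·E_j = 1, Δ·E_k = -1, Δ·E_i = 0 for i ≠ j, k, and E_k = E_j + Δ. -/
/-- An abstract smooth complex projective surface: its group of divisors with
intersection pairing, canonical divisor, effective cone, irreducible curves,
arithmetic genus (satisfying adjunction), and cohomology dimensions
`h⁰(D, O_D)`, `h¹(D, O_D)`, `h⁰(D, ω_D)`. -/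
structure Surface where
  Div : Type
  grp : AddCommGroup Div
  inter : Div → Div → ℤ
  inter_comm : ∀ A B, inter A B = inter B A
  inter_add_left : ∀ A B C, inter (A + B) C = inter A C + inter B C
  K : Div
  Eff : Div → Prop
  eff_zero : Eff 0
  eff_add : ∀ {A B}, Eff A → Eff B → Eff (A + B)
  Irr : Div → Prop
  irr_curve : ∀ {A}, Irr A → Eff A ∧ A ≠ 0
  pa : Div → ℤ
  adjunction : ∀ D, 2 * pa D - 2 = inter K D + inter D D
  h0O : Div → ℕ
  h1O : Div → ℕ
  h0ω : Div → ℕ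
  pa_def : ∀ D, (1 : ℤ) - pa D = (h0O D : ℤ) - (h1O D : ℤ)
  serre : ∀ D, h0ω D = h1O D

attribute [instance] Surface.grp

/-- A curve is a nonzero effective divisor. -/
def Surface.Curve (S : Surface) (D : S.Div) : Prop := S.Eff D ∧ D ≠ 0

/-- `D` is 1-connected: it is a curve and every decomposition `D = A + B`
into curves satisfies `A·B ≥ 1`. -/
def Surface.OneConnected (S : Surface) (D : S.Div) : Prop :=
  S.Curve D ∧ ∀ A B : S.Div, S.Curve A → S.Curve B → A + B = D → 1 ≤ S.inter A B

/-- The data of a birational morphism `p : T → W` of smooth projective surfaces,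
a composition of `s` blow-ups, recorded on the source surface `S = T`:
the total exceptional divisors `E 1, …, E s` (total transforms of the exceptional
curves of the blow-ups), the pullback `pK = p*K_W` of the canonical divisor of `W`,
and the predicate `Exc` of being supported on the `p`-exceptional locus
(i.e. contracted by `p` to a finite set of points). -/
structure Blowdown (S : Surface) (s : ℕ) where
  E : Fin s → S.Div
  pK : S.Div
  Exc : S.Div → Prop
  exc_zero : Exc 0
  exc_sub : ∀ {A B}, Exc A → Exc B → Exc (A - B)
  exc_E : ∀ i, Exc (E i)
  exc_comp : ∀ {D Γ}, Exc D → S.Eff D → S.Irr Γ → S.Eff (D - Γ) → Exc Γ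
  E_curve : ∀ i, S.Curve (E i)
  K_eq : S.K = pK + ∑ i, E i
  pK_exc : ∀ {D}, Exc D → S.inter pK D = 0
  EE : ∀ i j, S.inter (E i) (E j) = if i = j then -1 else 0
  negdef : ∀ {D}, Exc D → D ≠ 0 → S.inter D D < 0
  exc_span : ∀ {D}, Exc D → (∀ i, S.inter D (E i) = 0) → D = 0



section Helpers
variable (S : Surface)

lemma inter_zero_left (A : S.Div) : S.inter 0 A = 0 := by
  have h := S.inter_add_left 0 0 A
  rw [add_zero] at h; omega

lemma inter_neg_left (A B : S.Div) : S.inter (-A) B = -S.inter A B := by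
  have h := S.inter_add_left A (-A) B
  rw [add_neg_cancel, inter_zero_left] at h; omega

lemma inter_sub_left (A B C : S.Div) : S.inter (A - B) C = S.inter A C - S.inter B C := by
  rw [sub_eq_add_neg, S.inter_add_left, inter_neg_left]; ring

lemma inter_smul_left (c : ℤ) (A B : S.Div) : S.inter (c • A) B = c * S.inter A B := by
  induction c using Int.induction_on with
  | zero => simpa using inter_zero_left S B
  | succ n ih => rw [add_smul, S.inter_add_left, ih, one_smul]; ring
  | pred n ih => rw [sub_smul, inter_sub_left, ih, one_smul]; ring

lemma inter_sum_left {ι : Type*} (t : Finset ι) (f : ι → S.Div) (B : S.Div) :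
    S.inter (∑ i ∈ t, f i) B = ∑ i ∈ t, S.inter (f i) B := by
  induction t using Finset.cons_induction with
  | empty => simpa using inter_zero_left S B
  | cons a t ha ih => rw [Finset.sum_cons, Finset.sum_cons, S.inter_add_left, ih]

end Helpers

section ExcHelpers
variable {S : Surface} {s : ℕ} (B : Blowdown S s)

lemma exc_neg {A : S.Div} (h : B.Exc A) : B.Exc (-A) := by
  simpa using B.exc_sub B.exc_zero h

lemma exc_add {A C : S.Div} (hA : B.Exc A) (hC : B.Exc C) : B.Exc (A + C) := by
  simpa [sub_neg_eq_add] using B.exc_sub hA (exc_neg B hC)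

lemma exc_smul (c : ℤ) {A : S.Div} (h : B.Exc A) : B.Exc (c • A) := by
  induction c using Int.induction_on with
  | zero => simpa using B.exc_zero
  | succ n ih => rw [add_smul, one_smul]; exact exc_add B ih h
  | pred n ih => rw [sub_smul, one_smul]; exact B.exc_sub ih h

lemma exc_sum {ι : Type*} (t : Finset ι) (f : ι → S.Div) (h : ∀ i ∈ t, B.Exc (f i)) :
    B.Exc (∑ i ∈ t, f i) := by
  induction t using Finset.cons_induction with
  | empty => simpa using B.exc_zero
  | cons a t ha ih =>
      rw [Finset.sum_cons]
      exact exc_add B (h a (Finset.mem_cons_self a t)) (ih fun i hi => h i (Finset.mem_cons_of_mem hi))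

end ExcHelpers

lemma sq_ne_two (x : ℤ) : x * x ≠ 2 := by
  intro h
  rcases le_or_gt x 1 with h1 | h1
  · rcases le_or_gt (-1) x with h2 | h2
    · nlinarith
    · nlinarith
  · nlinarith

lemma key_comb {s : ℕ} (f : Fin s → ℤ) (h0 : ∑ i, f i = 0) (h2 : ∑ i, f i * f i = 2) :
    ∃ j k : Fin s, j ≠ k ∧ f j = 1 ∧ f k = -1 ∧ ∀ i, i ≠ j → i ≠ k → f i = 0 := by
  set t : Finset (Fin s) := Finset.univ.filter (fun i => f i ≠ 0) with ht
  have hoff : ∀ i, i ∉ t → f i = 0 := by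
    intro i hi
    by_contra h
    exact hi (Finset.mem_filter.mpr ⟨Finset.mem_univ i, h⟩)
  have hsum0 : ∑ i ∈ t, f i = 0 := by
    rw [← h0]
    exact Finset.sum_subset (Finset.subset_univ t) (fun i _ hi => hoff i hi)
  have hsum2 : ∑ i ∈ t, f i * f i = 2 := by
    rw [← h2]
    exact Finset.sum_subset (Finset.subset_univ t) (fun i _ hi => by rw [hoff i hi]; ring)
  have hone : ∀ i ∈ t, 1 ≤ f i * f i := by
    intro i hi
    have : f i ≠ 0 := (Finset.mem_filter.mp hi).2
    exact mul_self_pos.mpr this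
  have hcard : (t.card : ℤ) ≤ 2 := by
    calc (t.card : ℤ) = t.card • (1 : ℤ) := by simp
    _ ≤ ∑ i ∈ t, f i * f i := Finset.card_nsmul_le_sum t _ 1 hone
    _ = 2 := hsum2
  have hcard' : t.card ≤ 2 := by exact_mod_cast hcard
  interval_cases h : t.card
  · rw [Finset.card_eq_zero] at h
    rw [h] at hsum2; simp at hsum2
  · rw [Finset.card_eq_one] at h
    obtain ⟨j, hj⟩ := h
    rw [hj, Finset.sum_singleton] at hsum2
    exact absurd hsum2 (sq_ne_two (f j))
  · rw [Finset.card_eq_two] at h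
    obtain ⟨j, k, hjk, hset⟩ := h
    rw [hset, Finset.sum_pair hjk] at hsum0 hsum2
    have hoff' : ∀ i, i ≠ j → i ≠ k → f i = 0 := by
      intro i hij hik
      apply hoff
      rw [hset]; simp [hij, hik]
    have hfk : f k = -f j := by omega
    have hkk : f k * f k = f j * f j := by rw [hfk]; ring
    have hsq1 : f j * f j = 1 := by omega
    have : f j = 1 ∨ f j = -1 :=
      Int.isUnit_iff.mp (IsUnit.of_mul_eq_one _ hsq1)
    rcases this with h1 | h1
    · exact ⟨j, k, hjk, h1, by omega, hoff'⟩
    · exact ⟨k, j, hjk.symm, by omega, by omega, fun i hik hij => hoff' i hij hik⟩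


/-- for an effective divisor `Δ` contracted by `p` with `K_T·Δ = 0`
and `Δ² = -2` there are indices `j ≠ k` with `Δ·E_j = 1`, `Δ·E_k = -1`,
`Δ·E_i = 0` for `i ≠ j, k`, and `E_k = E_j + Δ`. -/
theorem stmt13 (S : Surface) (s : ℕ) (B : Blowdown S s) (Δ : S.Div)
    (hΔ : S.Eff Δ) (hexc : B.Exc Δ) (hK : S.inter S.K Δ = 0)
    (hsq : S.inter Δ Δ = -2) :
    ∃ j k : Fin s, j ≠ k ∧ S.inter Δ (B.E j) = 1 ∧ S.inter Δ (B.E k) = -1 ∧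
      (∀ i : Fin s, i ≠ j → i ≠ k → S.inter Δ (B.E i) = 0) ∧
      B.E k = B.E j + Δ := by
  set a : Fin s → ℤ := fun i => S.inter Δ (B.E i) with ha
  set D : S.Div := Δ + ∑ i, a i • B.E i with hD
  have hDexc : B.Exc D :=
    exc_add B hexc (exc_sum B _ _ fun i _ => exc_smul B (a i) (B.exc_E i))
  have hinter : ∀ i, S.inter (∑ i, a i • B.E i) (B.E i) = -a i := by
    intro j
    rw [inter_sum_left]
    have : ∀ i, S.inter (a i • B.E i) (B.E j) = if i = j then -a i else 0 := by
      intro i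
      rw [inter_smul_left, B.EE]
      split <;> ring
    simp only [this, Finset.sum_ite_eq', Finset.mem_univ, if_true]
  have hD0 : D = 0 := by
    apply B.exc_span hDexc
    intro i
    rw [hD, S.inter_add_left, hinter]
    simp [ha]
  have hΔeq : Δ = -∑ i, a i • B.E i :=
    eq_neg_of_add_eq_zero_left (hD.symm.trans hD0)
  have hsumA : ∑ i, a i = 0 := by
    have h := hK
    rw [B.K_eq, S.inter_add_left, B.pK_exc hexc, inter_sum_left, zero_add] at h
    rw [← h]
    exact Finset.sum_congr rfl fun i _ => S.inter_comm Δ (B.E i)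
  have h2 : ∑ i, a i * a i = 2 := by
    have h : S.inter Δ Δ = -∑ i, a i * a i := by
      nth_rewrite 1 [hΔeq]
      rw [inter_neg_left, inter_sum_left, neg_inj]
      exact Finset.sum_congr rfl fun i _ => by
        rw [inter_smul_left, S.inter_comm]
    omega
  obtain ⟨j, k, hjk, hj, hk, hoff⟩ := key_comb a hsumA h2
  have hsupp : ∀ i ∈ Finset.univ, i ∉ ({j, k} : Finset (Fin s)) → a i • B.E i = 0 := by
    intro i _ hi
    simp only [Finset.mem_insert, Finset.mem_singleton] at hi
    push_neg at hi
    rw [hoff i hi.1 hi.2, zero_smul]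
  have hsum : ∑ i, a i • B.E i = B.E j - B.E k := by
    rw [← Finset.sum_subset (Finset.subset_univ _) hsupp, Finset.sum_pair hjk, hj, hk]
    simp [sub_eq_add_neg]
  refine ⟨j, k, hjk, hj, hk, hoff, ?_⟩
  rw [hΔeq, hsum]
  abel
end

section
/- Let p: T → W be a birational morphism of smooth projective surfaces with total exceptional divisors E_1, ..., E_s. Let Δ, Δ' be distinct effective divisors contracted by p with K_T·Δ = K_T·Δ' = 0, Δ² = Δ'² = -2, and Δ·Δ' = 0. If Δ·E_j = 1 then Δ'·E_j = 0. -/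
/-
Set `e = E_j`, so `e² = -1` and `K·e = -1` (as `K = p*K_W + ∑ E_i` with `p*K_W` orthogonal to
exceptional divisors), and let `X = 2e + Δ`, so `X² = -2`, `K·X = -2` and `X·Δ' = 2 Δ'·e`.
The exceptional divisors `X ± Δ'` have `K·(X ± Δ') = -2`, so they are nonzero, and negative
definiteness gives `0 > (X ± Δ')² = -4 ± 4 Δ'·e`. Hence `|Δ'·e| < 1`.
-/

namespace Surface

variable (S : Surface)

def interLeft (B : S.Div) : S.Div →+ ℤ :=
  AddMonoidHom.mk' (S.inter · B) (fun A C => S.inter_add_left A C B)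

variable {S}

theorem inter_zero_left (B : S.Div) : S.inter 0 B = 0 :=
  map_zero (S.interLeft B)

theorem inter_sub_left (A C B : S.Div) : S.inter (A - C) B = S.inter A B - S.inter C B :=
  map_sub (S.interLeft B) A C

theorem inter_sum_left {ι : Type*} (s : Finset ι) (A : ι → S.Div) (B : S.Div) :
    S.inter (∑ i ∈ s, A i) B = ∑ i ∈ s, S.inter (A i) B :=
  map_sum (S.interLeft B) A s

theorem inter_add_right (A B C : S.Div) : S.inter A (B + C) = S.inter A B + S.inter A C := by
  rw [S.inter_comm, S.inter_add_left, S.inter_comm B, S.inter_comm C]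

theorem inter_sub_right (A B C : S.Div) : S.inter A (B - C) = S.inter A B - S.inter A C := by
  rw [S.inter_comm, inter_sub_left, S.inter_comm B, S.inter_comm C]

theorem inter_self_add (A B : S.Div) :
    S.inter (A + B) (A + B) = S.inter A A + 2 * S.inter A B + S.inter B B := by
  rw [S.inter_add_left, inter_add_right, inter_add_right, S.inter_comm B A]
  ring

theorem inter_self_sub (A B : S.Div) :
    S.inter (A - B) (A - B) = S.inter A A - 2 * S.inter A B + S.inter B B := by
  rw [inter_sub_left, inter_sub_right, inter_sub_right, S.inter_comm B A]
  ring

theorem ne_zero_of_inter_K_ne_zero {D : S.Div} (h : S.inter S.K D ≠ 0) : D ≠ 0 := by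
  rintro rfl
  exact h (by rw [S.inter_comm, inter_zero_left])

end Surface

namespace Blowdown

variable {S : Surface} {s : ℕ} (B : Blowdown S s)

theorem exc_add {A C : S.Div} (hA : B.Exc A) (hC : B.Exc C) : B.Exc (A + C) := by
  simpa using B.exc_sub hA (B.exc_sub B.exc_zero hC)

theorem inter_E_self (j : Fin s) : S.inter (B.E j) (B.E j) = -1 := by
  simpa using B.EE j j

theorem inter_K_E (j : Fin s) : S.inter S.K (B.E j) = -1 := by
  rw [B.K_eq, S.inter_add_left, B.pK_exc (B.exc_E j), Surface.inter_sum_left]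
  simp [B.EE]

theorem inter_self_neg_of_inter_K_ne_zero {D : S.Div} (hD : B.Exc D) (hK : S.inter S.K D ≠ 0) :
    S.inter D D < 0 :=
  B.negdef hD (Surface.ne_zero_of_inter_K_ne_zero hK)

theorem abs_two_mul_inter_lt {X Y : S.Div} (hX : B.Exc X) (hY : B.Exc Y)
    (hadd : S.inter S.K (X + Y) ≠ 0) (hsub : S.inter S.K (X - Y) ≠ 0) :
    |2 * S.inter X Y| < -(S.inter X X + S.inter Y Y) := by
  have hpos := B.inter_self_neg_of_inter_K_ne_zero (B.exc_add hX hY) hadd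
  have hneg := B.inter_self_neg_of_inter_K_ne_zero (B.exc_sub hX hY) hsub
  rw [Surface.inter_self_add] at hpos
  rw [Surface.inter_self_sub] at hneg
  exact abs_lt.mpr ⟨by linarith, by linarith⟩

end Blowdown

theorem stmt14_general (S : Surface) (s : ℕ) (B : Blowdown S s) (Δ Δ' : S.Div)
    (hexc : B.Exc Δ) (hK : S.inter S.K Δ = 0)
    (hsq : S.inter Δ Δ = -2)
    (hexc' : B.Exc Δ') (hK' : S.inter S.K Δ' = 0)
    (hsq' : S.inter Δ' Δ' = -2)
    (horth : S.inter Δ Δ' = 0)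
    (j : Fin s) (hj : S.inter Δ (B.E j) = 1) :
    S.inter Δ' (B.E j) = 0 := by
  set e := B.E j
  have hee : S.inter e e = -1 := B.inter_E_self j
  have hKe : S.inter S.K e = -1 := B.inter_K_E j
  have heΔ : S.inter e Δ = 1 := by rw [S.inter_comm, hj]
  have heΔ' : S.inter e Δ' = S.inter Δ' e := S.inter_comm _ _
  have hX : B.Exc (e + e + Δ) := B.exc_add (B.exc_add (B.exc_E j) (B.exc_E j)) hexc
  have hKX : S.inter S.K (e + e + Δ) = -2 := by
    simp only [Surface.inter_add_right, hKe, hK]; norm_num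
  have hXX : S.inter (e + e + Δ) (e + e + Δ) = -2 := by
    simp only [S.inter_add_left, Surface.inter_add_right, hee, heΔ, hj, hsq]; norm_num
  have hXΔ' : S.inter (e + e + Δ) Δ' = 2 * S.inter Δ' e := by
    simp only [S.inter_add_left, heΔ', horth]; ring
  have key := B.abs_two_mul_inter_lt hX hexc'
    (by rw [Surface.inter_add_right, hKX, hK']; norm_num)
    (by rw [Surface.inter_sub_right, hKX, hK']; norm_num)
  rw [hXX, hXΔ', hsq', abs_lt] at key
  omega

/-- if `Δ ≠ Δ'` are effective divisors contracted by `p` with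
`K_T·Δ = K_T·Δ' = 0`, `Δ² = Δ'² = -2` and `Δ·Δ' = 0`, then `Δ·E_j = 1`
implies `Δ'·E_j = 0`. -/
theorem stmt14 (S : Surface) (s : ℕ) (B : Blowdown S s) (Δ Δ' : S.Div)
    (hne : Δ ≠ Δ')
    (hΔ : S.Eff Δ) (hexc : B.Exc Δ) (hK : S.inter S.K Δ = 0)
    (hsq : S.inter Δ Δ = -2)
    (hΔ' : S.Eff Δ') (hexc' : B.Exc Δ') (hK' : S.inter S.K Δ' = 0)
    (hsq' : S.inter Δ' Δ' = -2)
    (horth : S.inter Δ Δ' = 0)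
    (j : Fin s) (hj : S.inter Δ (B.E j) = 1) :
    S.inter Δ' (B.E j) = 0 :=
  stmt14_general S s B Δ Δ' hexc hK hsq hexc' hK' hsq' horth j hj
end
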